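/- Let X be a set of feasible evaluations. Then X is a uniform possibility domain if and only if X admits a ternary aggregator every component of which is a weak near-unanimity operation. -/

import Mathlib

/-!
Fix an issue `j` and two values `a ≠ b` realised at it, and let `φ T` be the value of the
`j`-th component of a uniform non-dictatorial aggregator `F` at the profile voting `a` exactly
on `T`. If `φ T = φ Tᶜ` for some `T`, the binary minor splitting the voters along `T` is a
semilattice operation on `{a, b}`; otherwise `φ` is self-dual, and a ternary minor along a chain
`U ⊆ V` is a majority (when `φ` is monotone), a minority, or becomes a majority after the
substitution `ψ (x, ψ (x, y, z), z)`. Each of these is cyclic on `{a, b}`, and cyclicity on a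
set survives the composition `f (g (x, y, z), g (y, z, x), g (z, x, y))` with any aggregator on
either side, so finitely many compositions give one ternary aggregator that is cyclic, hence
weak near-unanimous, on all realised pairs. Off the realised values the conditions on an
aggregator leave it free, and any conservative weak near-unanimity operation can be used.

Conversely a weak near-unanimity aggregator takes one common value on the three profiles with a
single dissenter, and this value disagrees with every voter on one of them.
-/

/-- A set of feasible evaluations: every projection has at least two elements. -/
def Feasible {m : ℕ} {A : Fin m → Type*} (X : Set (∀ j, A j)) : Prop :=
  ∀ j, ∃ z ∈ X, ∃ z' ∈ X, z j ≠ z' j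

/-- An `n`-ary aggregator for a set `X` of feasible evaluations. -/
def IsAggregator {m : ℕ} {A : Fin m → Type*} {n : ℕ} (X : Set (∀ j, A j))
    (f : ∀ j, (Fin n → A j) → A j) : Prop :=
  (∀ j (x : Fin n → A j), ∃ i, f j x = x i) ∧
  (∀ xs : Fin n → (∀ j, A j), (∀ i, xs i ∈ X) → (fun j => f j (fun i => xs i j)) ∈ X)

/-- An `n`-ary tuple of operations is dictatorial on `X` if, on tuples from `X`,
each component acts as the projection on a common coordinate `d`. -/
def IsDictatorial {m : ℕ} {A : Fin m → Type*} {n : ℕ} (X : Set (∀ j, A j))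
    (f : ∀ j, (Fin n → A j) → A j) : Prop :=
  ∃ d : Fin n, ∀ xs : Fin n → (∀ j, A j), (∀ i, xs i ∈ X) →
    ∀ j, f j (fun i => xs i j) = xs d j

/-- `X` is a possibility domain: it admits a non-dictatorial aggregator of some
arity `n ≥ 2`. -/
def IsPossibilityDomain {m : ℕ} {A : Fin m → Type*} (X : Set (∀ j, A j)) : Prop :=
  ∃ n : ℕ, 2 ≤ n ∧ ∃ f : ∀ j, (Fin n → A j) → A j,
    IsAggregator X f ∧ ¬ IsDictatorial X f

/-- An `n`-ary aggregator is uniform non-dictatorial on `X` if, for every issue `j` and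
every two-element subset `{a,b}` of the `j`-th projection of `X`, the restriction of its
`j`-th component to `{a,b}ⁿ` differs from every projection. -/
def IsUniformNonDict {m : ℕ} {A : Fin m → Type*} {n : ℕ} (X : Set (∀ j, A j))
    (f : ∀ j, (Fin n → A j) → A j) : Prop :=
  ∀ j, ∀ a b : A j, a ≠ b → (∃ z ∈ X, z j = a) → (∃ z ∈ X, z j = b) →
    ∀ d : Fin n, ∃ x : Fin n → A j, (∀ i, x i = a ∨ x i = b) ∧ f j x ≠ x d

/-- `X` is a uniform possibility domain: it admits a uniform non-dictatorial aggregator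
of some arity `n ≥ 2`. -/
def IsUniformPossibilityDomain {m : ℕ} {A : Fin m → Type*} (X : Set (∀ j, A j)) : Prop :=
  ∃ n : ℕ, 2 ≤ n ∧ ∃ f : ∀ j, (Fin n → A j) → A j,
    IsAggregator X f ∧ IsUniformNonDict X f

/-- A ternary weak near-unanimity operation. -/
def IsWNUOp {B : Type*} (g : (Fin 3 → B) → B) : Prop :=
  ∀ x y : B, g ![y, x, x] = g ![x, y, x] ∧ g ![x, y, x] = g ![x, x, y]

abbrev MultiOp {m : ℕ} (A : Fin m → Type*) (n : ℕ) : Type _ := ∀ j, (Fin n → A j) → A j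

namespace MultiOp

variable {m : ℕ} {A : Fin m → Type*} {n k : ℕ}

def proj (d : Fin n) : MultiOp A n := fun _ v => v d

def comp (F : MultiOp A n) (G : Fin n → MultiOp A k) : MultiOp A k :=
  fun j v => F j (fun i => G i j v)

def minor (σ : Fin n → Fin k) (F : MultiOp A n) : MultiOp A k :=
  F.comp fun i => proj (σ i)

/-- `f (g (x, y, z), g (y, z, x), g (z, x, y))`. -/
def diamond (f g : MultiOp A 3) : MultiOp A 3 :=
  f.comp fun k => g.minor (· + k)

def foldr3 (h : MultiOp A 2) : MultiOp A 3 :=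
  h.comp ![proj 0, h.comp ![proj 1, proj 2]]

def sandwich (ψ : MultiOp A 3) : MultiOp A 3 :=
  ψ.comp ![proj 0, ψ, proj 2]

theorem comp_two (F : MultiOp A 2) (G₀ G₁ : MultiOp A k) (j : Fin m) (v : Fin k → A j) :
    F.comp ![G₀, G₁] j v = F j ![G₀ j v, G₁ j v] := by
  simp only [comp]; congr 1; funext i; fin_cases i <;> rfl

theorem comp_three (F : MultiOp A 3) (G₀ G₁ G₂ : MultiOp A k) (j : Fin m) (v : Fin k → A j) :
    F.comp ![G₀, G₁, G₂] j v = F j ![G₀ j v, G₁ j v, G₂ j v] := by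
  simp only [comp]; congr 1; funext i; fin_cases i <;> rfl

theorem foldr3_apply (h : MultiOp A 2) (j : Fin m) (v : Fin 3 → A j) :
    h.foldr3 j v = h j ![v 0, h j ![v 1, v 2]] := by
  simp only [foldr3, comp_two]; rfl

theorem sandwich_apply (ψ : MultiOp A 3) (j : Fin m) (v : Fin 3 → A j) :
    ψ.sandwich j v = ψ j ![v 0, ψ j v, v 2] := by
  simp only [sandwich, comp_three]; rfl

end MultiOp

open MultiOp

section Aggregator

variable {m : ℕ} {A : Fin m → Type*} {X : Set (∀ j, A j)} {n k : ℕ}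

theorem isAggregator_proj (d : Fin n) : IsAggregator X (proj (A := A) d) :=
  ⟨fun _ _ => ⟨d, rfl⟩, fun _ h => h d⟩

theorem IsAggregator.comp {F : MultiOp A n} {G : Fin n → MultiOp A k}
    (hF : IsAggregator X F) (hG : ∀ i, IsAggregator X (G i)) : IsAggregator X (F.comp G) := by
  refine ⟨fun j v => ?_, fun xs hxs => hF.2 _ fun i => (hG i).2 xs hxs⟩
  obtain ⟨i, hi⟩ := hF.1 j fun i => G i j v
  obtain ⟨i', hi'⟩ := (hG i).1 j v
  exact ⟨i', hi.trans hi'⟩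

theorem IsAggregator.minor {F : MultiOp A n} (hF : IsAggregator X F) (σ : Fin n → Fin k) :
    IsAggregator X (F.minor σ) :=
  hF.comp fun _ => isAggregator_proj _

theorem IsAggregator.diamond {f g : MultiOp A 3} (hf : IsAggregator X f)
    (hg : IsAggregator X g) : IsAggregator X (f.diamond g) :=
  hf.comp fun _ => hg.minor _

theorem IsAggregator.foldr3 {h : MultiOp A 2} (hh : IsAggregator X h) :
    IsAggregator X h.foldr3 :=
  hh.comp <| Fin.forall_fin_two.2 ⟨isAggregator_proj 0,
    hh.comp <| Fin.forall_fin_two.2 ⟨isAggregator_proj 1, isAggregator_proj 2⟩⟩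

theorem IsAggregator.sandwich {ψ : MultiOp A 3} (hψ : IsAggregator X ψ) :
    IsAggregator X ψ.sandwich :=
  hψ.comp <| by
    intro i; fin_cases i
    exacts [isAggregator_proj 0, hψ, isAggregator_proj 2]

theorem IsAggregator.apply_mem {F : MultiOp A n} (hF : IsAggregator X F) {j : Fin m}
    {S : Set (A j)} {v : Fin n → A j} (hv : ∀ i, v i ∈ S) : F j v ∈ S := by
  obtain ⟨i, hi⟩ := hF.1 j v
  exact hi ▸ hv i

theorem IsAggregator.apply_const {F : MultiOp A n} (hF : IsAggregator X F) (j : Fin m)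
    (c : A j) : F j (fun _ => c) = c := by
  obtain ⟨i, hi⟩ := hF.1 j fun _ => c
  exact hi

end Aggregator

section Cyclic

variable {B : Type*}

def IsCyclicOn (S : Set B) (g : (Fin 3 → B) → B) : Prop :=
  ∀ v : Fin 3 → B, (∀ i, v i ∈ S) → g (fun i => v (i + 1)) = g v

def IsWNUOn (S : Set B) (g : (Fin 3 → B) → B) : Prop :=
  ∀ x ∈ S, ∀ y ∈ S, g ![y, x, x] = g ![x, y, x] ∧ g ![x, y, x] = g ![x, x, y]

theorem forall_vec3_mem {S : Set B} {x y z : B} :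
    (∀ i, ![x, y, z] i ∈ S) ↔ x ∈ S ∧ y ∈ S ∧ z ∈ S := by
  simp [Fin.forall_fin_succ]

theorem vec3_rotate (x y z : B) : (fun i : Fin 3 => ![x, y, z] (i + 1)) = ![y, z, x] := by
  funext i; fin_cases i <;> rfl

theorem IsCyclicOn.apply_add {S : Set B} {g : (Fin 3 → B) → B} (hg : IsCyclicOn S g)
    {v : Fin 3 → B} (hv : ∀ i, v i ∈ S) (k : Fin 3) : g (fun i => v (i + k)) = g v := by
  fin_cases k
  · simp
  · exact hg v hv
  · have h := hg (fun i => v (i + 1)) fun i => hv _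
    simp only [add_assoc] at h
    exact h.trans (hg v hv)

theorem isCyclicOn_pair_of_eq {g : (Fin 3 → B) → B} {a b p q : B}
    (h₁ : g ![a, b, b] = p) (h₂ : g ![b, a, b] = p) (h₃ : g ![b, b, a] = p)
    (h₄ : g ![b, a, a] = q) (h₅ : g ![a, b, a] = q) (h₆ : g ![a, a, b] = q) :
    IsCyclicOn {a, b} g := by
  intro v hv
  obtain ⟨x, y, z, rfl⟩ : ∃ x y z, v = ![x, y, z] :=
    ⟨v 0, v 1, v 2, by funext i; fin_cases i <;> rfl⟩
  rw [vec3_rotate]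
  rcases hv 0 with hx | hx <;> rcases hv 1 with hy | hy <;> rcases hv 2 with hz | hz <;>
    simp_all

theorem IsCyclicOn.isWNUOn {S : Set B} {g : (Fin 3 → B) → B} (hg : IsCyclicOn S g) :
    IsWNUOn S g := fun x hx y hy => by
  constructor
  · simpa only [vec3_rotate] using hg ![x, y, x] (forall_vec3_mem.2 ⟨hx, hy, hx⟩)
  · simpa only [vec3_rotate] using hg ![x, x, y] (forall_vec3_mem.2 ⟨hx, hx, hy⟩)

end Cyclic

section Diamond

variable {m : ℕ} {A : Fin m → Type*} {X : Set (∀ j, A j)}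

theorem IsCyclicOn.diamond_left {f g : MultiOp A 3} {j : Fin m} {S : Set (A j)}
    (hf : IsCyclicOn S (f j)) (hg : IsAggregator X g) : IsCyclicOn S (f.diamond g j) := by
  intro v hv
  simp only [MultiOp.diamond, MultiOp.comp, MultiOp.minor, MultiOp.proj, add_assoc]
  exact hf (fun k => g j fun i => v (i + k)) fun k => hg.apply_mem fun i => hv _

theorem IsCyclicOn.diamond_apply {f g : MultiOp A 3} {j : Fin m} {S : Set (A j)}
    (hg : IsCyclicOn S (g j)) (hf : IsAggregator X f) {v : Fin 3 → A j} (hv : ∀ i, v i ∈ S) :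
    f.diamond g j v = g j v :=
  (congrArg (f j) (funext fun k => hg.apply_add hv k)).trans (hf.apply_const j _)

theorem IsCyclicOn.diamond_right {f g : MultiOp A 3} {j : Fin m} {S : Set (A j)}
    (hg : IsCyclicOn S (g j)) (hf : IsAggregator X f) : IsCyclicOn S (f.diamond g j) := by
  intro v hv
  rw [hg.diamond_apply hf hv, hg.diamond_apply hf fun i => hv _, hg v hv]

theorem exists_isAggregator_forall_isCyclicOn {ι : Type*} [Finite ι] (J : ι → Fin m)
    (S : ∀ t, Set (A (J t)))
    (h : ∀ t, ∃ g : MultiOp A 3, IsAggregator X g ∧ IsCyclicOn (S t) (g (J t))) :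
    ∃ g : MultiOp A 3, IsAggregator X g ∧ ∀ t, IsCyclicOn (S t) (g (J t)) := by
  classical
  choose G hG using h
  have := Fintype.ofFinite ι
  suffices ∀ s : Finset ι, ∃ g : MultiOp A 3, IsAggregator X g ∧
      ∀ t ∈ s, IsCyclicOn (S t) (g (J t)) by
    obtain ⟨g, hg, hs⟩ := this Finset.univ
    exact ⟨g, hg, fun t => hs t (Finset.mem_univ t)⟩
  intro s
  induction s using Finset.induction_on with
  | empty => exact ⟨proj 0, isAggregator_proj 0, by simp⟩
  | insert t s _ ih =>
    obtain ⟨g, hg, hs⟩ := ih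
    refine ⟨g.diamond (G t), hg.diamond (hG t).1, fun u hu => ?_⟩
    rcases Finset.mem_insert.1 hu with rfl | hu
    · exact (hG u).2.diamond_right hg
    · exact (hs u hu).diamond_left (hG t).1

end Diamond

section TwoValued

variable {m : ℕ} {A : Fin m → Type*} {X : Set (∀ j, A j)} {n : ℕ}

def pairVec {B : Type*} (a b : B) (T : Finset (Fin n)) : Fin n → B :=
  fun i => if i ∈ T then a else b

def binarySplit (T : Finset (Fin n)) (i : Fin n) : Fin 2 :=
  if i ∈ T then 0 else 1

def nestedSplit (U V : Finset (Fin n)) (i : Fin n) : Fin 3 :=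
  if i ∈ U then 0 else if i ∈ V then 1 else 2

theorem pairVec_mem {B : Type*} (a b : B) (T : Finset (Fin n)) (i : Fin n) :
    pairVec a b T i ∈ ({a, b} : Set B) := by
  unfold pairVec; split_ifs <;> simp

theorem eq_pairVec_filter {B : Type*} [DecidableEq B] {a b : B} {x : Fin n → B}
    (hx : ∀ i, x i = a ∨ x i = b) : x = pairVec a b (Finset.univ.filter fun i => x i = a) := by
  funext i
  rcases hx i with h | h <;> by_cases h' : x i = a <;> simp_all [pairVec]

theorem vec2_const {B : Type*} (c : B) : ![c, c] = fun _ => c := by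
  funext i; fin_cases i <;> rfl

theorem vec3_const {B : Type*} (c : B) : ![c, c, c] = fun _ => c := by
  funext i; fin_cases i <;> rfl

theorem minor_binarySplit_apply (F : MultiOp A n) (j : Fin m) (a b : A j)
    (T : Finset (Fin n)) :
    F.minor (binarySplit T) j ![a, b] = F j (pairVec a b T) ∧
      F.minor (binarySplit T) j ![b, a] = F j (pairVec a b Tᶜ) := by
  constructor <;> refine congrArg (F j) (funext fun i => ?_) <;>
    by_cases hT : i ∈ T <;> simp [proj, binarySplit, pairVec, hT]

theorem minor_nestedSplit_apply (F : MultiOp A n) (j : Fin m) (a b : A j)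
    {U V : Finset (Fin n)} (hUV : U ⊆ V) :
    F.minor (nestedSplit U V) j ![a, b, b] = F j (pairVec a b U) ∧
      F.minor (nestedSplit U V) j ![b, a, b] = F j (pairVec a b (V \ U)) ∧
      F.minor (nestedSplit U V) j ![b, b, a] = F j (pairVec a b Vᶜ) ∧
      F.minor (nestedSplit U V) j ![b, a, a] = F j (pairVec a b Uᶜ) ∧
      F.minor (nestedSplit U V) j ![a, b, a] = F j (pairVec a b (V \ U)ᶜ) ∧
      F.minor (nestedSplit U V) j ![a, a, b] = F j (pairVec a b V) := by
  refine ⟨?_, ?_, ?_, ?_, ?_, ?_⟩ <;> refine congrArg (F j) (funext fun i => ?_)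
  all_goals
    by_cases hU : i ∈ U
    · simp [proj, nestedSplit, pairVec, hU, hUV hU]
    · by_cases hV : i ∈ V <;> simp [proj, nestedSplit, pairVec, hU, hV]

theorem IsAggregator.apply_pairVec {F : MultiOp A n} (hF : IsAggregator X F) {j : Fin m}
    (a b : A j) (T : Finset (Fin n)) : F j (pairVec a b T) = a ∨ F j (pairVec a b T) = b :=
  hF.apply_mem (pairVec_mem a b T)

theorem IsAggregator.apply_compl_eq_of_apply_eq_left {F : MultiOp A n} (hF : IsAggregator X F)
    {j : Fin m} {a b : A j} {T : Finset (Fin n)}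
    (hT : F j (pairVec a b T) ≠ F j (pairVec a b Tᶜ)) (ha : F j (pairVec a b T) = a) :
    F j (pairVec a b Tᶜ) = b :=
  (hF.apply_pairVec a b Tᶜ).resolve_left fun h => hT (ha.trans h.symm)

theorem IsAggregator.apply_compl_eq_of_apply_eq_right {F : MultiOp A n} (hF : IsAggregator X F)
    {j : Fin m} {a b : A j} {T : Finset (Fin n)}
    (hT : F j (pairVec a b T) ≠ F j (pairVec a b Tᶜ)) (hb : F j (pairVec a b T) = b) :
    F j (pairVec a b Tᶜ) = a :=
  (hF.apply_pairVec a b Tᶜ).resolve_right fun h => hT (hb.trans h.symm)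

theorem IsAggregator.exists_isCyclicOn_of_apply_compl_eq {F : MultiOp A n}
    (hF : IsAggregator X F) {j : Fin m} {a b : A j} (T : Finset (Fin n))
    (hT : F j (pairVec a b T) = F j (pairVec a b Tᶜ)) :
    ∃ g : MultiOp A 3, IsAggregator X g ∧ IsCyclicOn {a, b} (g j) := by
  have hh := hF.minor (binarySplit T)
  obtain ⟨hab, hba⟩ := minor_binarySplit_apply F j a b T
  have haa := vec2_const a ▸ hh.apply_const j a
  have hbb := vec2_const b ▸ hh.apply_const j b
  refine ⟨_, hh.foldr3, ?_⟩
  rcases hF.apply_pairVec a b T with hc | hc <;>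
    [apply isCyclicOn_pair_of_eq (p := a) (q := a); apply isCyclicOn_pair_of_eq (p := b) (q := b)]
    <;> simp [foldr3_apply, hab, hba, ← hT, hc, haa, hbb]

theorem IsAggregator.exists_isCyclicOn_of_not_monotone {F : MultiOp A n}
    (hF : IsAggregator X F) {j : Fin m} {a b : A j}
    (hsd : ∀ T, F j (pairVec a b T) ≠ F j (pairVec a b Tᶜ)) {U V : Finset (Fin n)}
    (hUV : U ⊆ V) (hU : F j (pairVec a b U) = a) (hV : F j (pairVec a b V) = b) :
    ∃ g : MultiOp A 3, IsAggregator X g ∧ IsCyclicOn {a, b} (g j) := by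
  have hψ := hF.minor (nestedSplit U V)
  obtain ⟨h₁, h₂, h₃, h₄, h₅, h₆⟩ := minor_nestedSplit_apply F j a b hUV
  have hUc := hF.apply_compl_eq_of_apply_eq_left (hsd U) hU
  have hVc := hF.apply_compl_eq_of_apply_eq_right (hsd V) hV
  rcases hF.apply_pairVec a b (V \ U) with hW | hW
  · -- a minority operation on `{a, b}`
    have hWc := hF.apply_compl_eq_of_apply_eq_left (hsd _) hW
    exact ⟨_, hψ, isCyclicOn_pair_of_eq (p := a) (q := b)
      (by rw [h₁, hU]) (by rw [h₂, hW]) (by rw [h₃, hVc])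
      (by rw [h₄, hUc]) (by rw [h₅, hWc]) (by rw [h₆, hV])⟩
  · -- `ψ (x, y, z) = maj (x, ¬y, z)` on `{a, b}`, so its sandwich is the majority
    have hWc := hF.apply_compl_eq_of_apply_eq_right (hsd _) hW
    have haaa := vec3_const a ▸ hψ.apply_const j a
    have hbbb := vec3_const b ▸ hψ.apply_const j b
    refine ⟨_, hψ.sandwich, isCyclicOn_pair_of_eq (p := b) (q := a) ?_ ?_ ?_ ?_ ?_ ?_⟩ <;>
      simp [sandwich_apply, h₁, h₂, h₃, h₄, h₅, h₆, hU, hV, hW, hUc, hVc, hWc, haaa, hbbb]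

theorem pairVec_univ {B : Type*} (a b : B) :
    pairVec a b (Finset.univ : Finset (Fin n)) = fun _ => a :=
  funext fun _ => if_pos (Finset.mem_univ _)

theorem pairVec_empty {B : Type*} (a b : B) : pairVec a b (∅ : Finset (Fin n)) = fun _ => b :=
  funext fun _ => if_neg (Finset.notMem_empty _)

theorem IsAggregator.apply_pairVec_singleton_of_monotone {F : MultiOp A n}
    (hF : IsAggregator X F) {j : Fin m} {a b : A j} (hab : a ≠ b)
    (hsd : ∀ T, F j (pairVec a b T) ≠ F j (pairVec a b Tᶜ))
    (hmono : ∀ U V, U ⊆ V → F j (pairVec a b U) = a → F j (pairVec a b V) = a)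
    {d : Fin n} (hd : ∃ T, F j (pairVec a b T) ≠ pairVec a b T d) :
    F j (pairVec a b {d}) = b := by
  refine (hF.apply_pairVec a b {d}).resolve_left fun hda => ?_
  obtain ⟨T, hT⟩ := hd
  by_cases hdT : d ∈ T
  · exact hT ((hmono _ _ (Finset.singleton_subset_iff.2 hdT) hda).trans (if_pos hdT).symm)
  · have hTd : T ⊆ {d}ᶜ := fun i hi =>
      Finset.mem_compl.2 fun h => hdT (Finset.mem_singleton.1 h ▸ hi)
    rcases hF.apply_pairVec a b T with ha | hb
    · exact hab <| (hmono _ _ hTd ha).symm.trans <|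
        hF.apply_compl_eq_of_apply_eq_left (hsd {d}) hda
    · exact hT (hb.trans (if_neg hdT).symm)

theorem IsAggregator.exists_isCyclicOn_of_monotone {F : MultiOp A n}
    (hF : IsAggregator X F) {j : Fin m} {a b : A j} (hab : a ≠ b)
    (hsd : ∀ T, F j (pairVec a b T) ≠ F j (pairVec a b Tᶜ))
    (hmono : ∀ U V, U ⊆ V → F j (pairVec a b U) = a → F j (pairVec a b V) = a)
    (hnd : ∀ d, ∃ T, F j (pairVec a b T) ≠ pairVec a b T d) :
    ∃ g : MultiOp A 3, IsAggregator X g ∧ IsCyclicOn {a, b} (g j) := by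
  classical
  obtain ⟨M, hM, hMmin⟩ := Finset.exists_min_image
    (Finset.univ.filter fun T => F j (pairVec a b T) = a) Finset.card
    ⟨Finset.univ, by simp [pairVec_univ, hF.apply_const]⟩
  rw [Finset.mem_filter] at hM
  obtain ⟨d, hdM⟩ : M.Nonempty := Finset.nonempty_iff_ne_empty.2 fun h => hab <| by
    rw [← hM.2, h, pairVec_empty, hF.apply_const]
  have hd := hF.apply_pairVec_singleton_of_monotone hab hsd hmono (hnd d)
  have hMd : F j (pairVec a b (M \ {d})) = b := by
    refine (hF.apply_pairVec a b _).resolve_left fun h => ?_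
    have hle := hMmin _ (by simpa using h)
    rw [Finset.sdiff_singleton_eq_erase] at hle
    exact (Finset.card_erase_lt_of_mem hdM).not_ge hle
  obtain ⟨h₁, h₂, h₃, h₄, h₅, h₆⟩ :=
    minor_nestedSplit_apply F j a b (Finset.singleton_subset_iff.2 hdM)
  -- all three blocks `{d}`, `M \ {d}`, `Mᶜ` lose, so the minor is the majority on `{a, b}`
  exact ⟨_, hF.minor _, isCyclicOn_pair_of_eq (p := b) (q := a)
    (by rw [h₁, hd]) (by rw [h₂, hMd])
    (by rw [h₃, hF.apply_compl_eq_of_apply_eq_left (hsd M) hM.2])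
    (by rw [h₄, hF.apply_compl_eq_of_apply_eq_right (hsd _) hd])
    (by rw [h₅, hF.apply_compl_eq_of_apply_eq_right (hsd _) hMd]) (by rw [h₆, hM.2])⟩

theorem IsAggregator.exists_isCyclicOn_pair {F : MultiOp A n} (hF : IsAggregator X F)
    {j : Fin m} {a b : A j} (hab : a ≠ b)
    (hnd : ∀ d, ∃ x : Fin n → A j, (∀ i, x i = a ∨ x i = b) ∧ F j x ≠ x d) :
    ∃ g : MultiOp A 3, IsAggregator X g ∧ IsCyclicOn {a, b} (g j) := by
  classical
  have hnd' : ∀ d, ∃ T, F j (pairVec a b T) ≠ pairVec a b T d := fun d => by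
    obtain ⟨x, hx, hxd⟩ := hnd d
    exact ⟨_, eq_pairVec_filter hx ▸ hxd⟩
  by_cases hsd : ∃ T, F j (pairVec a b T) = F j (pairVec a b Tᶜ)
  · obtain ⟨T, hT⟩ := hsd
    exact hF.exists_isCyclicOn_of_apply_compl_eq T hT
  push Not at hsd
  by_cases hmono : ∀ U V, U ⊆ V → F j (pairVec a b U) = a → F j (pairVec a b V) = a
  · exact hF.exists_isCyclicOn_of_monotone hab hsd hmono hnd'
  push Not at hmono
  obtain ⟨U, V, hUV, hU, hV⟩ := hmono
  exact hF.exists_isCyclicOn_of_not_monotone hsd hUV hU ((hF.apply_pairVec a b V).resolve_left hV)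

end TwoValued

section WNU

variable {B : Type*}

open Classical in
/-- The majority of `x, y, z`, or `x` if they are pairwise distinct. -/
noncomputable def majorityOrFirst (v : Fin 3 → B) : B :=
  if v 1 = v 2 then v 1 else v 0

theorem majorityOrFirst_eq (v : Fin 3 → B) : ∃ i, majorityOrFirst v = v i := by
  unfold majorityOrFirst; split_ifs
  exacts [⟨1, rfl⟩, ⟨0, rfl⟩]

theorem isWNUOp_majorityOrFirst : IsWNUOp (majorityOrFirst (B := B)) := by
  intro x y
  by_cases h : x = y <;> simp [majorityOrFirst, h, eq_comm]

open Classical in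
theorem IsWNUOn.isWNUOp_ite {S : Set B} {g h : (Fin 3 → B) → B} (hg : IsWNUOn S g)
    (hh : IsWNUOp h) : IsWNUOp fun v => if ∀ i, v i ∈ S then g v else h v := by
  intro x y
  simp only [forall_vec3_mem]
  by_cases hx : x ∈ S <;> by_cases hy : y ∈ S
  · simp [hx, hy, hg x hx y hy]
  all_goals simp [hx, hy, hh x y]

end WNU

section Extension

variable {m : ℕ} {A : Fin m → Type*} {X : Set (∀ j, A j)}

theorem IsAggregator.ite {n : ℕ} {f h : MultiOp A n} (hf : IsAggregator X f)
    (hh : ∀ j v, ∃ i, h j v = v i)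
    [∀ j (v : Fin n → A j), Decidable (∀ i, v i ∈ (· j) '' X)] :
    IsAggregator X fun j v => if ∀ i, v i ∈ (· j) '' X then f j v else h j v := by
  refine ⟨fun j v => ?_, fun xs hxs => ?_⟩
  · dsimp only; split_ifs
    exacts [hf.1 j v, hh j v]
  · convert hf.2 xs hxs using 2 with j
    exact if_pos fun i => ⟨xs i, hxs i, rfl⟩

theorem IsAggregator.exists_isWNUOp {f : MultiOp A 3} (hf : IsAggregator X f)
    (hwnu : ∀ j, IsWNUOn ((· j) '' X) (f j)) :
    ∃ f' : MultiOp A 3, IsAggregator X f' ∧ ∀ j, IsWNUOp (f' j) := by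
  classical
  exact ⟨_, hf.ite fun _ => majorityOrFirst_eq,
    fun j => (hwnu j).isWNUOp_ite isWNUOp_majorityOrFirst⟩

theorem IsAggregator.isUniformNonDict {f : MultiOp A 3} (hf : IsAggregator X f)
    (hwnu : ∀ j, IsWNUOp (f j)) : IsUniformNonDict X f := by
  intro j a b hab _ _ d
  obtain ⟨h₁, h₂⟩ := hwnu j a b
  have hbaa : ∀ i, ![b, a, a] i ∈ ({a, b} : Set (A j)) := forall_vec3_mem.2 (by simp)
  have haba : ∀ i, ![a, b, a] i ∈ ({a, b} : Set (A j)) := forall_vec3_mem.2 (by simp)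
  have haab : ∀ i, ![a, a, b] i ∈ ({a, b} : Set (A j)) := forall_vec3_mem.2 (by simp)
  obtain hc | hc : f j ![b, a, a] = a ∨ f j ![b, a, a] = b := hf.apply_mem hbaa
  all_goals fin_cases d
  · exact ⟨_, hbaa, by simp [hc, hab]⟩
  · exact ⟨_, haba, by simp [← h₁, hc, hab]⟩
  · exact ⟨_, haab, by simp [← h₂, ← h₁, hc, hab]⟩
  · exact ⟨_, haba, by simp [← h₁, hc, hab.symm]⟩
  · exact ⟨_, hbaa, by simp [hc, hab.symm]⟩
  · exact ⟨_, hbaa, by simp [hc, hab.symm]⟩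

end Extension

theorem statement_19_general {m : ℕ} {A : Fin m → Type*} [∀ j, Fintype (A j)]
    (X : Set (∀ j, A j)) :
    IsUniformPossibilityDomain X ↔
      (∃ f : ∀ j, (Fin 3 → A j) → A j, IsAggregator X f ∧ ∀ j, IsWNUOp (f j)) := by
  constructor
  · rintro ⟨n, -, F, hF, hund⟩
    obtain ⟨g, hg, hcyc⟩ := exists_isAggregator_forall_isCyclicOn (X := X)
      (ι := {t : Σ j, A j × A j //
        t.2.1 ≠ t.2.2 ∧ (∃ z ∈ X, z t.1 = t.2.1) ∧ ∃ z ∈ X, z t.1 = t.2.2})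
      (fun t => t.1.1) (fun t => {t.1.2.1, t.1.2.2})
      fun ⟨⟨j, a, b⟩, hab, ha, hb⟩ => hF.exists_isCyclicOn_pair hab (hund j a b hab ha hb)
    refine hg.exists_isWNUOp fun j x hx y hy => ?_
    by_cases hxy : x = y
    · subst hxy; exact ⟨rfl, rfl⟩
    · exact (hcyc ⟨⟨j, x, y⟩, hxy, hx, hy⟩).isWNUOn x (by simp) y (by simp)
  · rintro ⟨f, hf, hwnu⟩
    exact ⟨3, by norm_num, f, hf, hf.isUniformNonDict hwnu⟩

/-- `X` is a uniform possibility domain iff `X` admits a ternary aggregator every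
component of which is a weak near-unanimity operation. -/
theorem statement_19 {m : ℕ} (hm : 1 ≤ m) {A : Fin m → Type*} [∀ j, Fintype (A j)]
    (hA : ∀ j, 2 ≤ Fintype.card (A j))
    (X : Set (∀ j, A j)) (hX : Feasible X) :
    IsUniformPossibilityDomain X ↔
      (∃ f : ∀ j, (Fin 3 → A j) → A j, IsAggregator X f ∧ ∀ j, IsWNUOp (f j)) :=
  statement_19_general X
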